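/- arXiv:2105.12915 — 5 statements merged into one kernel-verified Lean document; each statement's English description precedes it below -/
import Mathlib

section
/- Suppose a choice correspondence c over finite nonempty sets of dated payments admits a PBDU representation. Then the following are equivalent: (1) c satisfies WARP over 𝒜; (2) c satisfies Stationarity over 𝒜; (3) c admits an exponential discounting utility representation; (4) c admits a utility representation. -/
/-!
If `δ` is constant on `[0, t̄)`, the PBDU representation is already exponential with factor
`δ 0`: a problem whose earliest payment arrives at `t̄` has all its payments dated `t̄`, so its
discount factor cancels. Exponential discounting is a utility representation, hence satisfies
WARP, and it is stationary because shifting every date by `d` rescales all values by `δ ^ d`.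

Otherwise `δ 0 < δ d` for some `0 < d < t̄`, and continuity of `u` gives a payment `x` with
`δ 0 ^ (t̄ - d) u b < u x < δ d ^ (t̄ - d) u b` (the lower end is reachable because
`(b, t̄) ∈ c {(a, 0), (b, t̄)}` means `u a ≤ δ 0 ^ t̄ u b`). Then `(b, t̄)` alone is chosen from
`{(x, d), (b, t̄)}`, which is evaluated with `δ d`, while `(x, d)` is chosen from
`{(a, 0), (x, d), (b, t̄)}` and `(x, 0)` from `{(x, 0), (b, t̄ - d)}`, both evaluated with `δ 0`:
the first contradicts WARP, the second Stationarity with shift `d`.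
-/

noncomputable section

/-- Dated payments: a payment `x ∈ [a,b]` arriving at time `t ∈ [0,t̄]`. -/
abbrev TAlt (a b tb : ℝ) : Type :=
  {z : ℝ × ℝ // z.1 ∈ Set.Icc a b ∧ z.2 ∈ Set.Icc 0 tb}

variable {a b tb : ℝ}

/-- `c` satisfies WARP over a collection `S` of choice problems. -/
def WARPover (c : Finset (TAlt a b tb) → Finset (TAlt a b tb))
    (S : Set (Finset (TAlt a b tb))) : Prop :=
  ∀ A ∈ S, ∀ B ∈ S, B ⊆ A → (c A ∩ B).Nonempty → c A ∩ B = c B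

/-- `c` satisfies Stationarity over a collection `S` of choice problems. -/
def StatOver (c : Finset (TAlt a b tb) → Finset (TAlt a b tb))
    (S : Set (Finset (TAlt a b tb))) : Prop :=
  ∀ A ∈ S, ∀ B ∈ S, ∀ d : ℝ, 0 < d →
    ∀ xt yq xtd yqd : TAlt a b tb,
      xtd.1.1 = xt.1.1 → xtd.1.2 = xt.1.2 + d →
      yqd.1.1 = yq.1.1 → yqd.1.2 = yq.1.2 + d →
      xt ∈ c A → yq ∈ A → yqd ∈ c B → xtd ∈ B → xtd ∈ c B

/-- The set of earliest payments in `A`. -/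
def PsiT (A : Finset (TAlt a b tb)) : Set (TAlt a b tb) :=
  {z : TAlt a b tb | z ∈ A ∧ ∀ z' ∈ A, z.1.2 ≤ z'.1.2}

/-- Time Reference Dependence: WARP and Stationarity hold between any two choice
problems sharing an earliest payment. -/
def TimeRefDep (c : Finset (TAlt a b tb) → Finset (TAlt a b tb)) : Prop :=
  ∀ A B : Finset (TAlt a b tb), A.Nonempty → B.Nonempty →
    (PsiT A ∩ PsiT B).Nonempty →
    WARPover c {A, B} ∧ StatOver c {A, B}

/-- Outcome Monotonicity: a larger payment at the same time is chosen. -/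
def OutMono (c : Finset (TAlt a b tb) → Finset (TAlt a b tb)) : Prop :=
  ∀ z z' : TAlt a b tb, z.1.2 = z'.1.2 → z'.1.1 < z.1.1 → c {z, z'} = {z}

/-- Impatience: the same payment arriving sooner is chosen. -/
def Impatience (c : Finset (TAlt a b tb) → Finset (TAlt a b tb)) : Prop :=
  ∀ z z' : TAlt a b tb, z.1.1 = z'.1.1 → z.1.2 < z'.1.2 → c {z, z'} = {z}

/-- Present Bias axiom. -/
def PresentBias (c : Finset (TAlt a b tb) → Finset (TAlt a b tb)) : Prop :=
  (∀ (z1 z3 w1 w3 : TAlt a b tb) (d : ℝ), 0 < d →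
    z1.1.2 < z3.1.2 →
    w1.1.1 = z1.1.1 → w1.1.2 = z1.1.2 + d →
    w3.1.1 = z3.1.1 → w3.1.2 = z3.1.2 + d →
    c {z1, z3} = {z3} → c {w1, w3} = {w3}) ∧
  (∀ (z1 z2 z3 w1 w2 w3 : TAlt a b tb) (lam d : ℝ), 0 < lam → lam < 1 →
    z1.1.2 < z2.1.2 → z2.1.2 < z3.1.2 →
    w1.1.1 = z1.1.1 → w1.1.2 = lam * z1.1.2 + d →
    w2.1.1 = z2.1.1 → w2.1.2 = lam * z2.1.2 + d →
    w3.1.1 = z3.1.1 → w3.1.2 = lam * z3.1.2 + d →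
    c {z1, z2, z3} = {z1, z2, z3} →
    w1 ∈ c {w1, w2, w3} → w3 ∈ c {w1, w2, w3} → w2 ∈ c {w1, w2, w3})

/-- Continuity: `c` has a closed graph w.r.t. the Hausdorff distance. -/
def ClosedGraphC (c : Finset (TAlt a b tb) → Finset (TAlt a b tb)) : Prop :=
  ∀ (x : TAlt a b tb) (xs : ℕ → TAlt a b tb) (A : Finset (TAlt a b tb))
    (As : ℕ → Finset (TAlt a b tb)),
    A.Nonempty → (∀ n, (As n).Nonempty) →
    Filter.Tendsto xs Filter.atTop (nhds x) →
    Filter.Tendsto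
      (fun n => Metric.hausdorffDist ((As n : Set (TAlt a b tb))) (A : Set (TAlt a b tb)))
      Filter.atTop (nhds 0) →
    (∀ n, xs n ∈ c (As n)) → x ∈ c A

/-- `c` admits a PBDU representation with data `(u, δ, r)`. -/
def IsPBDU (a b tb : ℝ) (c : Finset (TAlt a b tb) → Finset (TAlt a b tb))
    (u : ℝ → ℝ) (δ : ℝ → ℝ) (r : Finset (TAlt a b tb) → ℝ) : Prop :=
  StrictMonoOn u (Set.Icc a b) ∧ ContinuousOn u (Set.Icc a b) ∧
  (∀ x ∈ Set.Icc a b, 0 < u x) ∧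
  (∀ t ∈ Set.Icc (0 : ℝ) tb, δ t ∈ Set.Ioo (0 : ℝ) 1) ∧
  (∀ t t' : ℝ, t ∈ Set.Icc (0 : ℝ) tb → t' ∈ Set.Icc (0 : ℝ) tb → t < t' → δ t ≤ δ t') ∧
  (∀ A : Finset (TAlt a b tb), A.Nonempty →
    (∃ z ∈ A, z.1.2 = r A) ∧ ∀ z ∈ A, r A ≤ z.1.2) ∧
  (∀ A : Finset (TAlt a b tb), A.Nonempty → ∀ z : TAlt a b tb,
    z ∈ c A ↔ z ∈ A ∧ ∀ z' ∈ A,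
      δ (r A) ^ z'.1.2 * u z'.1.1 ≤ δ (r A) ^ z.1.2 * u z.1.1) ∧
  ClosedGraphC c

/-- The alternative `(a, 0)`. -/
def altA0 (a b tb : ℝ) (hab : a ≤ b) (htb : 0 ≤ tb) : TAlt a b tb :=
  ⟨(a, 0), Set.mem_Icc.mpr ⟨le_rfl, hab⟩, Set.mem_Icc.mpr ⟨le_rfl, htb⟩⟩

/-- The alternative `(b, t̄)`. -/
def altBT (a b tb : ℝ) (hab : a ≤ b) (htb : 0 ≤ tb) : TAlt a b tb :=
  ⟨(b, tb), Set.mem_Icc.mpr ⟨hab, le_rfl⟩, Set.mem_Icc.mpr ⟨htb, le_rfl⟩⟩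

variable {α : Type*}

def IsArgmaxOn (U : α → ℝ) (A C : Finset α) : Prop :=
  ∀ z, z ∈ C ↔ z ∈ A ∧ ∀ z' ∈ A, U z' ≤ U z

namespace IsArgmaxOn

variable {U V : α → ℝ} {A B C D : Finset α}

theorem congr_iff (h : ∀ z ∈ A, ∀ z' ∈ A, (U z' ≤ U z ↔ V z' ≤ V z)) :
    IsArgmaxOn U A C ↔ IsArgmaxOn V A C :=
  forall_congr' fun _ => iff_congr Iff.rfl
    (and_congr_right fun hz => forall₂_congr fun z' hz' => h _ hz z' hz')

theorem inter_eq [DecidableEq α] (hA : IsArgmaxOn U A C) (hB : IsArgmaxOn U B D) (hBA : B ⊆ A)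
    (hne : (C ∩ B).Nonempty) : C ∩ B = D := by
  obtain ⟨w, hw⟩ := hne
  rw [Finset.mem_inter, hA] at hw
  ext z
  rw [Finset.mem_inter, hA, hB]
  constructor
  · rintro ⟨⟨-, hz⟩, hzB⟩
    exact ⟨hzB, fun z' hz' => hz z' (hBA hz')⟩
  · rintro ⟨hzB, hz⟩
    exact ⟨⟨hBA hzB, fun z' hz' => (hw.1.2 z' hz').trans (hz w hw.2)⟩, hzB⟩

theorem pair_eq [DecidableEq α] {z w : α} (h : IsArgmaxOn U {z, w} C) (hlt : U z < U w) :
    C = {w} := by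
  refine Finset.ext fun y => (h y).trans ?_
  rw [Finset.forall_mem_insert]
  simp only [Finset.mem_insert, Finset.mem_singleton, forall_eq]
  constructor
  · rintro ⟨rfl | rfl, -, hw⟩
    · exact absurd (hlt.trans_le hw) (lt_irrefl _)
    · rfl
  · rintro rfl
    exact ⟨Or.inr rfl, hlt.le, le_rfl⟩

end IsArgmaxOn

theorem ContinuousOn.exists_mem_Icc_mem_Ioo {f : ℝ → ℝ} {x y s t : ℝ}
    (hf : ContinuousOn f (Set.Icc x y)) (hxy : x ≤ y) (hs : f x ≤ s) (hst : s < t)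
    (ht : t ≤ f y) : ∃ z ∈ Set.Icc x y, f z ∈ Set.Ioo s t := by
  obtain ⟨z, hz, hfz⟩ := intermediate_value_Icc hxy hf
    (show (s + t) / 2 ∈ Set.Icc (f x) (f y) from ⟨by linarith, by linarith⟩)
  exact ⟨z, hz, by linarith, by linarith⟩

theorem Real.rpow_mul_rpow_sub_mul {D : ℝ} (hD : 0 < D) (s t y : ℝ) :
    D ^ s * (D ^ (t - s) * y) = D ^ t * y := by
  rw [← mul_assoc, ← Real.rpow_add hD, add_sub_cancel]

section ChoiceAxioms

variable {c : Finset (TAlt a b tb) → Finset (TAlt a b tb)}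

theorem warpOver_of_isArgmaxOn {U : TAlt a b tb → ℝ}
    (h : ∀ A : Finset (TAlt a b tb), A.Nonempty → IsArgmaxOn U A (c A)) :
    WARPover c {A | A.Nonempty} :=
  fun A hA B hB hBA hne => (h A hA).inter_eq (h B hB) hBA hne

theorem statOver_of_exponential {D : ℝ} {u : ℝ → ℝ} (hD : 0 < D)
    (h : ∀ A : Finset (TAlt a b tb), A.Nonempty →
      IsArgmaxOn (fun z => D ^ z.1.2 * u z.1.1) A (c A)) :
    StatOver c {A | A.Nonempty} := by
  intro A hA B hB d hd xt yq xtd yqd hx hxt hy hyt hxtA hyqA hyqdB hxtdB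
  have hshift : ∀ z z' : TAlt a b tb, z'.1.1 = z.1.1 → z'.1.2 = z.1.2 + d →
      D ^ z'.1.2 * u z'.1.1 = D ^ d * (D ^ z.1.2 * u z.1.1) := by
    intro z z' h1 h2
    rw [h1, h2, Real.rpow_add hD]
    ring
  refine ((h B hB) xtd).2 ⟨hxtdB, fun z' hz' => (((h B hB) yqd).1 hyqdB).2 z' hz' |>.trans ?_⟩
  dsimp only
  rw [hshift yq yqd hy hyt, hshift xt xtd hx hxt]
  exact mul_le_mul_of_nonneg_left ((((h A hA) xt).1 hxtA).2 yq hyqA) (by positivity)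

end ChoiceAxioms

namespace IsPBDU

variable {c : Finset (TAlt a b tb) → Finset (TAlt a b tb)} {u δ : ℝ → ℝ}
  {r : Finset (TAlt a b tb) → ℝ} {A : Finset (TAlt a b tb)}

theorem discount_mem (hrep : IsPBDU a b tb c u δ r) {t : ℝ} (ht : t ∈ Set.Icc 0 tb) :
    δ t ∈ Set.Ioo 0 1 :=
  hrep.2.2.2.1 t ht

theorem isArgmaxOn (hrep : IsPBDU a b tb c u δ r) (hA : A.Nonempty) :
    IsArgmaxOn (fun z => δ (r A) ^ z.1.2 * u z.1.1) A (c A) :=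
  hrep.2.2.2.2.2.2.1 A hA

theorem r_le_of_mem (hrep : IsPBDU a b tb c u δ r) {z : TAlt a b tb} (hz : z ∈ A) :
    r A ≤ z.1.2 :=
  (hrep.2.2.2.2.2.1 A ⟨z, hz⟩).2 z hz

theorem r_mem_Icc (hrep : IsPBDU a b tb c u δ r) (hA : A.Nonempty) : r A ∈ Set.Icc 0 tb := by
  obtain ⟨⟨z, -, hz⟩, -⟩ := hrep.2.2.2.2.2.1 A hA
  rw [← hz]
  exact z.2.2

theorem r_eq (hrep : IsPBDU a b tb c u δ r) {z : TAlt a b tb} (hz : z ∈ A)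
    (hle : ∀ z' ∈ A, z.1.2 ≤ z'.1.2) : r A = z.1.2 := by
  obtain ⟨⟨z0, hz0, hr⟩, -⟩ := hrep.2.2.2.2.2.1 A ⟨z, hz⟩
  exact le_antisymm (hrep.r_le_of_mem hz) ((hle z0 hz0).trans_eq hr)

theorem r_eq_zero (hrep : IsPBDU a b tb c u δ r) {z : TAlt a b tb} (hz : z ∈ A)
    (h0 : z.1.2 = 0) : r A = 0 :=
  (hrep.r_eq hz fun z' _ => h0.trans_le z'.2.2.1).trans h0

theorem choice_pair_eq (hrep : IsPBDU a b tb c u δ r) {z w : TAlt a b tb}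
    (hzw : z.1.2 ≤ w.1.2) (hlt : u z.1.1 < δ z.1.2 ^ (w.1.2 - z.1.2) * u w.1.1) :
    c {z, w} = {w} := by
  have hδ := (hrep.discount_mem z.2.2).1
  have hr : r {z, w} = z.1.2 := hrep.r_eq (Finset.mem_insert_self _ _) (by simp [hzw])
  refine (hrep.isArgmaxOn (Finset.insert_nonempty _ _)).pair_eq ?_
  simp only [hr]
  rw [← Real.rpow_mul_rpow_sub_mul hδ z.1.2 w.1.2 (u w.1.1)]
  exact mul_lt_mul_of_pos_left hlt (Real.rpow_pos_of_pos hδ _)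

theorem isArgmaxOn_of_discount_const (hrep : IsPBDU a b tb c u δ r)
    (hconst : ∀ t ∈ Set.Ico 0 tb, δ t = δ 0) (hA : A.Nonempty) :
    IsArgmaxOn (fun z => δ 0 ^ z.1.2 * u z.1.1) A (c A) := by
  obtain ⟨h0, hle⟩ := hrep.r_mem_Icc hA
  rcases hle.lt_or_eq with hlt | heq
  · simpa only [hconst _ ⟨h0, hlt⟩] using hrep.isArgmaxOn hA
  · have htimes : ∀ z ∈ A, z.1.2 = tb := fun z hz =>
      le_antisymm z.2.2.2 (heq.symm.trans_le (hrep.r_le_of_mem hz))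
    have hpos : ∀ t ∈ Set.Icc 0 tb, 0 < δ t ^ tb := fun t ht =>
      Real.rpow_pos_of_pos (hrep.discount_mem ht).1 _
    refine (IsArgmaxOn.congr_iff fun z hz z' hz' => ?_).mp (hrep.isArgmaxOn hA)
    rw [htimes z hz, htimes z' hz', mul_le_mul_iff_right₀ (hpos _ ⟨h0, hle⟩),
      mul_le_mul_iff_right₀ (hpos 0 ⟨le_rfl, h0.trans hle⟩)]

theorem u_le_of_base (hrep : IsPBDU a b tb c u δ r) (hab : a ≤ b) (htb : 0 ≤ tb)
    (hbase : altBT a b tb hab htb ∈ c {altA0 a b tb hab htb, altBT a b tb hab htb}) :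
    u a ≤ δ 0 ^ tb * u b := by
  have h := ((hrep.isArgmaxOn (Finset.insert_nonempty _ _) _).1 hbase).2 _
    (Finset.mem_insert_self _ _)
  rw [hrep.r_eq_zero (Finset.mem_insert_self _ _) rfl] at h
  simpa [altA0, altBT] using h

theorem exists_lt_of_not_const (hrep : IsPBDU a b tb c u δ r)
    (hconst : ¬ ∀ t ∈ Set.Ico 0 tb, δ t = δ 0) : ∃ d ∈ Set.Ioo 0 tb, δ 0 < δ d := by
  push Not at hconst
  obtain ⟨d, ⟨hd0, hdtb⟩, hne⟩ := hconst
  have hd : 0 < d := hd0.lt_of_ne (by rintro rfl; exact hne rfl)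
  exact ⟨d, ⟨hd, hdtb⟩, (hrep.2.2.2.2.1 0 d ⟨le_rfl, hd0.trans hdtb.le⟩ ⟨hd0, hdtb.le⟩ hd).lt_of_ne
    hne.symm⟩

theorem exists_reversal (hrep : IsPBDU a b tb c u δ r) (hab : a ≤ b)
    (hua : u a ≤ δ 0 ^ tb * u b) {d : ℝ} (hd : d ∈ Set.Ioo 0 tb) (hδd : δ 0 < δ d) :
    ∃ x ∈ Set.Icc a b, u x ∈ Set.Ioo (δ 0 ^ (tb - d) * u b) (δ d ^ (tb - d) * u b) := by
  have hδ0 := hrep.discount_mem ⟨le_rfl, (hd.1.trans hd.2).le⟩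
  have hδd' := hrep.discount_mem ⟨hd.1.le, hd.2.le⟩
  have hub : 0 < u b := hrep.2.2.1 b ⟨hab, le_rfl⟩
  refine hrep.2.1.exists_mem_Icc_mem_Ioo hab (hua.trans ?_) ?_ ?_
  · exact mul_le_mul_of_nonneg_right
      (Real.rpow_le_rpow_of_exponent_ge hδ0.1 hδ0.2.le (by linarith [hd.1])) hub.le
  · exact mul_lt_mul_of_pos_right (Real.rpow_lt_rpow hδ0.1.le hδd (sub_pos.2 hd.2)) hub
  · exact mul_le_of_le_one_left hub.le
      (Real.rpow_le_one hδd'.1.le hδd'.2.le (sub_nonneg.2 hd.2.le))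

theorem not_warpOver (hrep : IsPBDU a b tb c u δ r) (hab : a ≤ b)
    (hua : u a ≤ δ 0 ^ tb * u b) {d x : ℝ} (hd : d ∈ Set.Ioo 0 tb) (hx : x ∈ Set.Icc a b)
    (hux : u x ∈ Set.Ioo (δ 0 ^ (tb - d) * u b) (δ d ^ (tb - d) * u b)) :
    ¬ WARPover c {A | A.Nonempty} := by
  intro hwarp
  have htb : 0 ≤ tb := (hd.1.trans hd.2).le
  set z0 : TAlt a b tb := ⟨(a, 0), ⟨le_rfl, hab⟩, le_rfl, htb⟩
  set z1 : TAlt a b tb := ⟨(x, d), hx, hd.1.le, hd.2.le⟩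
  set z2 : TAlt a b tb := ⟨(b, tb), ⟨hab, le_rfl⟩, htb, le_rfl⟩
  have hδ0 := (hrep.discount_mem ⟨le_rfl, htb⟩).1
  have hB : c {z1, z2} = {z2} := hrep.choice_pair_eq hd.2.le hux.2
  have hz1 : z1 ∈ c {z0, z1, z2} := by
    have hz2z1 : δ 0 ^ tb * u b ≤ δ 0 ^ d * u x := by
      rw [← Real.rpow_mul_rpow_sub_mul hδ0 d tb (u b)]
      exact mul_le_mul_of_nonneg_left hux.1.le (Real.rpow_pos_of_pos hδ0 _).le
    rw [hrep.isArgmaxOn (Finset.insert_nonempty _ _),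
      hrep.r_eq_zero (Finset.mem_insert_self _ _) rfl]
    simp only [Finset.forall_mem_insert, Finset.mem_singleton, forall_eq]
    exact ⟨by simp, by simpa [z0] using hua.trans hz2z1, le_rfl, hz2z1⟩
  have hz1B : z1 ∈ c {z1, z2} := by
    rw [← hwarp _ (Finset.insert_nonempty _ _) _ (Finset.insert_nonempty _ _)
      (Finset.subset_insert _ _) ⟨z1, Finset.mem_inter.2 ⟨hz1, Finset.mem_insert_self _ _⟩⟩]
    exact Finset.mem_inter.2 ⟨hz1, Finset.mem_insert_self _ _⟩
  rw [hB, Finset.mem_singleton] at hz1B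
  exact hd.2.ne (congrArg (fun z => z.1.2) hz1B)

theorem not_statOver (hrep : IsPBDU a b tb c u δ r) (hab : a ≤ b) {d x : ℝ}
    (hd : d ∈ Set.Ioo 0 tb) (hx : x ∈ Set.Icc a b)
    (hux : u x ∈ Set.Ioo (δ 0 ^ (tb - d) * u b) (δ d ^ (tb - d) * u b)) :
    ¬ StatOver c {A | A.Nonempty} := by
  intro hstat
  have htb : 0 ≤ tb := (hd.1.trans hd.2).le
  set xt : TAlt a b tb := ⟨(x, 0), hx, le_rfl, htb⟩
  set yq : TAlt a b tb := ⟨(b, tb - d), ⟨hab, le_rfl⟩, sub_nonneg.2 hd.2.le, by linarith [hd.1]⟩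
  set xtd : TAlt a b tb := ⟨(x, d), hx, hd.1.le, hd.2.le⟩
  set yqd : TAlt a b tb := ⟨(b, tb), ⟨hab, le_rfl⟩, htb, le_rfl⟩
  have hB : c {xtd, yqd} = {yqd} := hrep.choice_pair_eq hd.2.le hux.2
  have hxt : xt ∈ c {xt, yq} := by
    rw [hrep.isArgmaxOn (Finset.insert_nonempty _ _),
      hrep.r_eq_zero (Finset.mem_insert_self _ _) rfl]
    simp only [Finset.forall_mem_insert, Finset.mem_singleton, forall_eq]
    exact ⟨Finset.mem_insert_self _ _, le_rfl, by simpa [xt] using hux.1.le⟩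
  have hxtd := hstat _ (Finset.insert_nonempty _ _) _ (Finset.insert_nonempty _ _) d hd.1
    xt yq xtd yqd rfl (zero_add d).symm rfl (sub_add_cancel tb d).symm hxt
    (Finset.mem_insert_of_mem (Finset.mem_singleton_self _)) (hB ▸ Finset.mem_singleton_self _)
    (Finset.mem_insert_self _ _)
  rw [hB, Finset.mem_singleton] at hxtd
  exact hd.2.ne (congrArg (fun z => z.1.2) hxtd)

theorem discount_const_of_warpOver (hrep : IsPBDU a b tb c u δ r) (hab : a ≤ b)
    (hua : u a ≤ δ 0 ^ tb * u b) (hwarp : WARPover c {A | A.Nonempty}) :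
    ∀ t ∈ Set.Ico 0 tb, δ t = δ 0 := by
  by_contra hconst
  obtain ⟨d, hd, hδd⟩ := hrep.exists_lt_of_not_const hconst
  obtain ⟨x, hx, hux⟩ := hrep.exists_reversal hab hua hd hδd
  exact hrep.not_warpOver hab hua hd hx hux hwarp

theorem discount_const_of_statOver (hrep : IsPBDU a b tb c u δ r) (hab : a ≤ b)
    (hua : u a ≤ δ 0 ^ tb * u b) (hstat : StatOver c {A | A.Nonempty}) :
    ∀ t ∈ Set.Ico 0 tb, δ t = δ 0 := by
  by_contra hconst
  obtain ⟨d, hd, hδd⟩ := hrep.exists_lt_of_not_const hconst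
  obtain ⟨x, hx, hux⟩ := hrep.exists_reversal hab hua hd hδd
  exact hrep.not_statOver hab hd hx hux hstat

end IsPBDU

theorem stmt6_general (a b tb : ℝ) (hab : a < b) (htb : 0 < tb)
    (c : Finset (TAlt a b tb) → Finset (TAlt a b tb))
    (hbase : altBT a b tb hab.le htb.le ∈
      c {altA0 a b tb hab.le htb.le, altBT a b tb hab.le htb.le})
    (u : ℝ → ℝ) (δ : ℝ → ℝ) (r : Finset (TAlt a b tb) → ℝ)
    (hrep : IsPBDU a b tb c u δ r) :
    List.TFAE
      [WARPover c {A : Finset (TAlt a b tb) | A.Nonempty},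
       StatOver c {A : Finset (TAlt a b tb) | A.Nonempty},
       ∃ (δ0 : ℝ) (u0 : ℝ → ℝ), δ0 ∈ Set.Ioo (0 : ℝ) 1 ∧
         StrictMonoOn u0 (Set.Icc a b) ∧ ContinuousOn u0 (Set.Icc a b) ∧
         (∀ x ∈ Set.Icc a b, 0 < u0 x) ∧
         ∀ A : Finset (TAlt a b tb), A.Nonempty → ∀ z : TAlt a b tb,
           z ∈ c A ↔ z ∈ A ∧ ∀ z' ∈ A,
             δ0 ^ z'.1.2 * u0 z'.1.1 ≤ δ0 ^ z.1.2 * u0 z.1.1,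
       ∃ U : TAlt a b tb → ℝ, ∀ A : Finset (TAlt a b tb), A.Nonempty →
         ∀ z : TAlt a b tb, z ∈ c A ↔ z ∈ A ∧ ∀ z' ∈ A, U z' ≤ U z] := by
  have hua := hrep.u_le_of_base hab.le htb.le hbase
  have hexp : (∀ t ∈ Set.Ico 0 tb, δ t = δ 0) → ∃ (δ0 : ℝ) (u0 : ℝ → ℝ),
      δ0 ∈ Set.Ioo (0 : ℝ) 1 ∧ StrictMonoOn u0 (Set.Icc a b) ∧ ContinuousOn u0 (Set.Icc a b) ∧
      (∀ x ∈ Set.Icc a b, 0 < u0 x) ∧ ∀ A : Finset (TAlt a b tb), A.Nonempty →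
        IsArgmaxOn (fun z => δ0 ^ z.1.2 * u0 z.1.1) A (c A) := fun hconst =>
    ⟨δ 0, u, hrep.discount_mem ⟨le_rfl, htb.le⟩, hrep.1, hrep.2.1, hrep.2.2.1,
      fun _ hA => hrep.isArgmaxOn_of_discount_const hconst hA⟩
  tfae_have 1 → 3 := fun hwarp => hexp (hrep.discount_const_of_warpOver hab.le hua hwarp)
  tfae_have 2 → 3 := fun hstat => hexp (hrep.discount_const_of_statOver hab.le hua hstat)
  tfae_have 3 → 2 := fun ⟨_, _, hδ0, _, _, _, h⟩ => statOver_of_exponential hδ0.1 h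
  tfae_have 3 → 4 := fun ⟨_, _, _, _, _, _, h⟩ => ⟨_, h⟩
  tfae_have 4 → 1 := fun ⟨_, h⟩ => warpOver_of_isArgmaxOn h
  tfae_finish

/-- Proposition 3: given a PBDU representation, WARP, Stationarity,
exponential discounting utility representation, and utility representation are all
equivalent. -/
theorem stmt6 (a b tb : ℝ) (ha : 0 < a) (hab : a < b) (htb : 0 < tb)
    (c : Finset (TAlt a b tb) → Finset (TAlt a b tb))
    (hc : ∀ A : Finset (TAlt a b tb), A.Nonempty → c A ⊆ A ∧ (c A).Nonempty)
    (hbase : altBT a b tb hab.le htb.le ∈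
      c {altA0 a b tb hab.le htb.le, altBT a b tb hab.le htb.le})
    (u : ℝ → ℝ) (δ : ℝ → ℝ) (r : Finset (TAlt a b tb) → ℝ)
    (hrep : IsPBDU a b tb c u δ r) :
    List.TFAE
      [WARPover c {A : Finset (TAlt a b tb) | A.Nonempty},
       StatOver c {A : Finset (TAlt a b tb) | A.Nonempty},
       ∃ (δ0 : ℝ) (u0 : ℝ → ℝ), δ0 ∈ Set.Ioo (0 : ℝ) 1 ∧
         StrictMonoOn u0 (Set.Icc a b) ∧ ContinuousOn u0 (Set.Icc a b) ∧
         (∀ x ∈ Set.Icc a b, 0 < u0 x) ∧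
         ∀ A : Finset (TAlt a b tb), A.Nonempty → ∀ z : TAlt a b tb,
           z ∈ c A ↔ z ∈ A ∧ ∀ z' ∈ A,
             δ0 ^ z'.1.2 * u0 z'.1.1 ≤ δ0 ^ z.1.2 * u0 z.1.1,
       ∃ U : TAlt a b tb → ℝ, ∀ A : Finset (TAlt a b tb), A.Nonempty →
         ∀ z : TAlt a b tb, z ∈ c A ↔ z ∈ A ∧ ∀ z' ∈ A, U z' ≤ U z] :=
  stmt6_general a b tb hab htb c hbase u δ r hrep

end
end

section
/- A choice correspondence c over finite nonempty sets of dated payments satisfies Time Reference Dependence if and only if for every choice problem A ∈ 𝒜 and every earliest payment (x,t) ∈ Ψ(A), c satisfies WARP and Stationarity over {B ∈ 𝒜 : B ⊆ A and (x,t) ∈ B}. -/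
noncomputable section

variable {a b tb : ℝ}

/-- Lemma 1: Time Reference Dependence is equivalent to requiring
WARP and Stationarity over the subsets of each choice problem containing a fixed
earliest payment. -/
theorem stmt7 (a b tb : ℝ) (ha : 0 < a) (hab : a < b) (htb : 0 < tb)
    (c : Finset (TAlt a b tb) → Finset (TAlt a b tb))
    (hc : ∀ A : Finset (TAlt a b tb), A.Nonempty → c A ⊆ A ∧ (c A).Nonempty) :
    TimeRefDep c ↔
      ∀ A : Finset (TAlt a b tb), A.Nonempty → ∀ z ∈ PsiT A,
        WARPover c {B : Finset (TAlt a b tb) | B ⊆ A ∧ z ∈ B} ∧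
        StatOver c {B : Finset (TAlt a b tb) | B ⊆ A ∧ z ∈ B} := by
  have warpMono : ∀ (S T : Set (Finset (TAlt a b tb))), T ⊆ S →
      WARPover c S → WARPover c T := fun S T hTS h A hA B hB =>
    h A (hTS hA) B (hTS hB)
  have statMono : ∀ (S T : Set (Finset (TAlt a b tb))), T ⊆ S →
      StatOver c S → StatOver c T := fun S T hTS h A hA B hB =>
    h A (hTS hA) B (hTS hB)
  constructor
  · intro h A hA z hz
    have hz' : ∀ B : Finset (TAlt a b tb), B ⊆ A → z ∈ B → z ∈ PsiT B :=
      fun B hBA hzB => ⟨hzB, fun z' hz'B => hz.2 z' (hBA hz'B)⟩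
    have key : ∀ B1 ∈ {B : Finset (TAlt a b tb) | B ⊆ A ∧ z ∈ B},
        ∀ B2 ∈ {B : Finset (TAlt a b tb) | B ⊆ A ∧ z ∈ B},
        WARPover c {B1, B2} ∧ StatOver c {B1, B2} := by
      intro B1 hB1 B2 hB2
      exact h B1 B2 ⟨z, hB1.2⟩ ⟨z, hB2.2⟩
        ⟨z, hz' B1 hB1.1 hB1.2, hz' B2 hB2.1 hB2.2⟩
    constructor
    · intro B1 hB1 B2 hB2
      exact (key B1 hB1 B2 hB2).1 B1 (Or.inl rfl) B2 (Or.inr rfl)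
    · intro B1 hB1 B2 hB2
      exact (key B1 hB1 B2 hB2).2 B1 (Or.inl rfl) B2 (Or.inr rfl)
  · rintro h A B hA hB ⟨z, hzA, hzB⟩
    have hzC : z ∈ PsiT (A ∪ B) := by
      refine ⟨Finset.mem_union_left _ hzA.1, fun z' hz' => ?_⟩
      rcases Finset.mem_union.mp hz' with h' | h'
      · exact hzA.2 z' h'
      · exact hzB.2 z' h'
    have hmain := h (A ∪ B) ⟨z, Finset.mem_union_left _ hzA.1⟩ z hzC
    have hsub : ({A, B} : Set (Finset (TAlt a b tb))) ⊆
        {D | D ⊆ A ∪ B ∧ z ∈ D} := by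
      rintro D (rfl | rfl)
      · exact ⟨Finset.subset_union_left, hzA.1⟩
      · exact ⟨Finset.subset_union_right, hzB.1⟩
    exact ⟨warpMono _ _ hsub hmain.1, statMono _ _ hsub hmain.2⟩

end
end

section
/- Let c : 𝒜 → 𝒜 be a choice correspondence with c(A) ⊆ A for all A, let 𝒯 be a finite property, and let Ψ : 𝒜 → 𝒜 satisfy Ψ(A) ⊆ A and the hereditarity condition (a ∈ B ⊆ A and a ∈ Ψ(A) imply a ∈ Ψ(B)). Then the following are equivalent: (1) for every A ∈ 𝒜 there exists x ∈ Ψ(A) such that the restriction of c to {B ∈ 𝒜 : B ⊆ A and x ∈ B} belongs to 𝒯; (2) there exists a Ψ-consistent linear order R on Y such that for every x ∈ Y, the restriction of c to {B ∈ 𝒜 : the R-greatest element of B is x} belongs to 𝒯. -/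
/-- A partial choice correspondence: a domain of (finite nonempty) choice problems
together with a nonempty-valued selection on that domain. -/
structure PCC (Y : Type*) where
  /-- the domain of observed choice problems -/
  dom : Set (Finset Y)
  /-- the choice map -/
  f : Finset Y → Finset Y
  valid : ∀ A ∈ dom, A.Nonempty ∧ f A ⊆ A ∧ (f A).Nonempty

/-- `c₁ ⊆ c₂`: `c₁` is a restriction of `c₂`. -/
def PCC.le {Y : Type*} (c₁ c₂ : PCC Y) : Prop :=
  c₁.dom ⊆ c₂.dom ∧ ∀ A ∈ c₁.dom, c₁.f A = c₂.f A

/-- The restriction of a partial choice correspondence to a subdomain. -/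
def PCC.restrict {Y : Type*} (c : PCC Y) (s : Set (Finset Y)) (hs : s ⊆ c.dom) : PCC Y :=
  ⟨s, c.f, fun A hA => c.valid A (hs hA)⟩

/-- A property of choice correspondences: a collection closed under restriction. -/
def IsProperty {Y : Type*} (T : Set (PCC Y)) : Prop :=
  ∀ c₁ c₂ : PCC Y, PCC.le c₁ c₂ → c₂ ∈ T → c₁ ∈ T

/-- A finite property: non-compliance can always be detected on finitely many
choice problems. -/
def IsFiniteProperty {Y : Type*} (T : Set (PCC Y)) : Prop :=
  IsProperty T ∧ ∀ c : PCC Y,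
    (c ∉ T ↔ ∃ (s : Finset (Finset Y)) (hs : (s : Set (Finset Y)) ⊆ c.dom),
      c.restrict (s : Set (Finset Y)) hs ∉ T)

theorem exists_lin {Y : Type*} : ∃ R : Y → Y → Prop, IsLinearOrder Y R := by
  haveI := (inferInstance : IsWellOrder Y WellOrderingRel)
  refine ⟨fun a b => WellOrderingRel a b ∨ a = b,
    { refl := fun a => Or.inr rfl
      trans := ?_
      antisymm := ?_
      total := fun a b => ?_ }⟩
  · rintro a b c (h1 | rfl) (h2 | rfl)
    · exact Or.inl (trans_of _ h1 h2)
    · exact Or.inl h1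
    · exact Or.inl h2
    · exact Or.inr rfl
  · rintro a b (h1 | rfl) (h2 | h2)
    · exact absurd (trans_of _ h1 h2) (irrefl_of _ a)
    · exact h2.symm
    · rfl
    · rfl
  · rcases trichotomous_of WellOrderingRel a b with h | h | h
    exacts [Or.inl (Or.inl h), Or.inl (Or.inr h), Or.inr (Or.inl h)]

theorem key {Y : Type*} (c : Finset Y → Finset Y)
    (T : Set (PCC Y))
    (Ψ : Finset Y → Set Y)
    (hΨsub : ∀ A : Finset Y, Ψ A ⊆ (A : Set Y))
    (hΨher : ∀ (A B : Finset Y) (x : Y), x ∈ B → B ⊆ A → x ∈ Ψ A → x ∈ Ψ B)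
    (h1 : ∀ A : Finset Y, A.Nonempty → ∃ x ∈ Ψ A, ∀ p : PCC Y, p.f = c →
      p.dom ⊆ {B : Finset Y | B ⊆ A ∧ x ∈ B} → p ∈ T) :
    ∀ D : Finset Y, ∃ R : Y → Y → Prop, IsLinearOrder Y R ∧
      (∀ A : Finset Y, A.Nonempty → A ⊆ D → ∃ x ∈ A, x ∈ Ψ A ∧ ∀ y ∈ A, R x y) ∧
      (∀ x ∈ D, ∀ p : PCC Y, p.f = c →
        p.dom ⊆ {B : Finset Y | B ⊆ D ∧ B.Nonempty ∧ x ∈ B ∧ ∀ y ∈ B, R x y} → p ∈ T) := by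
  classical
  intro D
  induction D using Finset.strongInduction with
  | _ D ih =>
    rcases D.eq_empty_or_nonempty with rfl | hDne
    · obtain ⟨R, hR⟩ := exists_lin (Y := Y)
      refine ⟨R, hR, ?_, ?_⟩
      · intro A hA hAD
        exact absurd (Finset.subset_empty.mp hAD) (Finset.nonempty_iff_ne_empty.mp hA)
      · intro x hx
        simp at hx
    · obtain ⟨x₀, hx₀Ψ, hx₀T⟩ := h1 D hDne
      have hx₀D : x₀ ∈ D := hΨsub D hx₀Ψ
      obtain ⟨R', hR', hI', hII'⟩ := ih (D.erase x₀) (Finset.erase_ssubset hx₀D)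
      haveI := hR'
      refine ⟨fun a b => a = x₀ ∨ (b ≠ x₀ ∧ R' a b), ?_, ?_, ?_⟩
      · refine { refl := fun a => ?_, trans := ?_, antisymm := ?_, total := fun a b => ?_ }
        · by_cases h : a = x₀
          · exact Or.inl h
          · exact Or.inr ⟨h, refl_of R' a⟩
        · rintro a b d (rfl | ⟨hb, hab⟩) h2
          · exact Or.inl rfl
          · rcases h2 with rfl | ⟨hd, hbd⟩
            · exact absurd rfl hb
            · exact Or.inr ⟨hd, trans_of R' hab hbd⟩
        · rintro a b (rfl | ⟨hb, hab⟩) (rfl | ⟨ha, hba⟩)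
          · rfl
          · exact absurd rfl ha
          · exact absurd rfl hb
          · exact antisymm_of R' hab hba
        · by_cases ha : a = x₀
          · exact Or.inl (Or.inl ha)
          · by_cases hb : b = x₀
            · exact Or.inr (Or.inl hb)
            · rcases total_of R' a b with h | h
              · exact Or.inl (Or.inr ⟨hb, h⟩)
              · exact Or.inr (Or.inr ⟨ha, h⟩)
      · intro A hAne hAD
        by_cases hx₀A : x₀ ∈ A
        · exact ⟨x₀, hx₀A, hΨher D A x₀ hx₀A hAD hx₀Ψ, fun y _ => Or.inl rfl⟩
        · have hA' : A ⊆ D.erase x₀ := Finset.subset_erase.mpr ⟨hAD, hx₀A⟩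
          obtain ⟨x, hxA, hxΨ, hall⟩ := hI' A hAne hA'
          refine ⟨x, hxA, hxΨ, fun y hy => Or.inr ⟨?_, hall y hy⟩⟩
          rintro rfl; exact hx₀A hy
      · intro x hxD p hpf hpd
        by_cases hx : x = x₀
        · subst hx
          refine hx₀T p hpf fun B hB => ?_
          obtain ⟨h1, _, h3, _⟩ := hpd hB
          exact ⟨h1, h3⟩
        · refine hII' x (Finset.mem_erase.mpr ⟨hx, hxD⟩) p hpf fun B hB => ?_
          obtain ⟨hBD, hBne, hxB, hall⟩ := hpd hB
          have hx₀B : x₀ ∉ B := by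
            intro hx₀B
            rcases hall x₀ hx₀B with rfl | ⟨h, _⟩
            · exact hx rfl
            · exact h rfl
          refine ⟨Finset.subset_erase.mpr ⟨hBD, hx₀B⟩, hBne, hxB, fun y hy => ?_⟩
          rcases hall y hy with rfl | ⟨_, h⟩
          · exact absurd rfl hx
          · exact h

theorem ult_finset {α β : Type*} (F : Ultrafilter α) (s : Finset β) (p : β → α → Prop)
    (h : ∀ᶠ a in (F : Filter α), ∃ x ∈ s, p x a) : ∃ x ∈ s, ∀ᶠ a in (F : Filter α), p x a := by
  classical
  induction s using Finset.induction with
  | empty =>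
    obtain ⟨a, ha⟩ := h.exists
    simp at ha
  | @insert b s hb ih =>
    have h' : ∀ᶠ a in (F : Filter α), p b a ∨ ∃ x ∈ s, p x a := by
      refine h.mono fun a ha => ?_
      obtain ⟨x, hx, hpx⟩ := ha
      rcases Finset.mem_insert.mp hx with rfl | hx
      · exact Or.inl hpx
      · exact Or.inr ⟨x, hx, hpx⟩
    rcases Ultrafilter.eventually_or.mp h' with h'' | h''
    · exact ⟨b, Finset.mem_insert_self b s, h''⟩
    · obtain ⟨x, hx, hpx⟩ := ih h''
      exact ⟨x, Finset.mem_insert_of_mem hx, hpx⟩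

/-- Lemma A.2: for a finite property `𝒯` and a hereditary
restriction map `Ψ`, reference dependence w.r.t. `𝒯` and `Ψ` is equivalent to the
existence of a `Ψ`-consistent linear order whose reference classes all satisfy `𝒯`. -/
theorem stmt10 {Y : Type*} (c : Finset Y → Finset Y)
    (hc : ∀ A : Finset Y, A.Nonempty → c A ⊆ A ∧ (c A).Nonempty)
    (T : Set (PCC Y)) (hT : IsFiniteProperty T)
    (Ψ : Finset Y → Set Y)
    (hΨsub : ∀ A : Finset Y, Ψ A ⊆ (A : Set Y))
    (hΨne : ∀ A : Finset Y, A.Nonempty → (Ψ A).Nonempty)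
    (hΨher : ∀ (A B : Finset Y) (x : Y), x ∈ B → B ⊆ A → x ∈ Ψ A → x ∈ Ψ B) :
    ((∀ A : Finset Y, A.Nonempty → ∃ x ∈ Ψ A,
        (⟨{B : Finset Y | B ⊆ A ∧ x ∈ B}, c, fun B hB => by
          have hxB : x ∈ B := hB.2
          exact ⟨⟨x, hxB⟩, (hc B ⟨x, hxB⟩).1, (hc B ⟨x, hxB⟩).2⟩⟩ : PCC Y) ∈ T)
      ↔
      ∃ R : Y → Y → Prop, IsLinearOrder Y R ∧
        (∀ A : Finset Y, A.Nonempty → ∀ y ∈ A, y ∉ Ψ A → ∃ x ∈ Ψ A, R x y) ∧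
        ∀ x : Y,
          (⟨{B : Finset Y | B.Nonempty ∧ x ∈ B ∧ ∀ y ∈ B, R x y}, c, fun B hB => by
            exact ⟨hB.1, (hc B hB.1).1, (hc B hB.1).2⟩⟩ : PCC Y) ∈ T) := by
  classical
  constructor
  · intro h
    -- abstract form of the hypothesis
    have h1 : ∀ A : Finset Y, A.Nonempty → ∃ x ∈ Ψ A, ∀ p : PCC Y, p.f = c →
        p.dom ⊆ {B : Finset Y | B ⊆ A ∧ x ∈ B} → p ∈ T := by
      intro A hA
      obtain ⟨x, hxΨ, hxT⟩ := h A hA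
      refine ⟨x, hxΨ, fun p hpf hpd => hT.1 p _ ⟨hpd, fun B hB => by rw [hpf]⟩ hxT⟩
    have hkey := key c T Ψ hΨsub hΨher h1
    choose Rfam hLO hI hII using hkey
    -- the ultrafilter
    haveI : (Filter.atTop : Filter (Finset Y)).NeBot := Filter.atTop_neBot
    set F : Ultrafilter (Finset Y) := Ultrafilter.of Filter.atTop with hF
    have hmem : ∀ D₀ : Finset Y, ∀ᶠ D in (F : Filter (Finset Y)), D₀ ⊆ D := by
      intro D₀
      exact Ultrafilter.of_le Filter.atTop (Filter.mem_atTop D₀)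
    have hrefl : ∀ (D : Finset Y) (a : Y), Rfam D a a := fun D a => by
      haveI := hLO D; exact refl_of (Rfam D) a
    have htrans : ∀ (D : Finset Y) (a b d : Y), Rfam D a b → Rfam D b d → Rfam D a d :=
      fun D a b d h1 h2 => by haveI := hLO D; exact trans_of (Rfam D) h1 h2
    have hanti : ∀ (D : Finset Y) (a b : Y), Rfam D a b → Rfam D b a → a = b :=
      fun D a b h1 h2 => by haveI := hLO D; exact antisymm_of (Rfam D) h1 h2
    have htot : ∀ (D : Finset Y) (a b : Y), Rfam D a b ∨ Rfam D b a :=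
      fun D a b => by haveI := hLO D; exact total_of (Rfam D) a b
    refine ⟨fun a b => ∀ᶠ D in (F : Filter (Finset Y)), Rfam D a b, ?_, ?_, ?_⟩
    · refine { refl := fun a => Filter.Eventually.of_forall fun D => hrefl D a
               trans := fun a b d h1 h2 => (h1.and h2).mono fun D hD => htrans D a b d hD.1 hD.2
               antisymm := fun a b h1 h2 => ?_
               total := fun a b => ?_ }
      · obtain ⟨D, u, v⟩ := (h1.and h2).exists
        exact hanti D a b u v
      · exact Ultrafilter.eventually_or.mp
          (Filter.Eventually.of_forall fun D => htot D a b)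
    · intro A hAne y hyA hyΨ
      have hEv : ∀ᶠ D in (F : Filter (Finset Y)), ∃ x ∈ A, x ∈ Ψ A ∧ Rfam D x y := by
        refine (hmem A).mono fun D hAD => ?_
        obtain ⟨x, hxA, hxΨ, hall⟩ := hI D A hAne hAD
        exact ⟨x, hxA, hxΨ, hall y hyA⟩
      obtain ⟨x, hxA, hx⟩ := ult_finset F A _ hEv
      have hxΨ : x ∈ Ψ A := (hx.exists).choose_spec.1
      exact ⟨x, hxΨ, hx.mono fun D hD => hD.2⟩
    · intro x
      by_contra hnot
      obtain ⟨s, hs, hres⟩ := (hT.2 _).mp hnot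
      have hE1 : ∀ᶠ D in (F : Filter (Finset Y)), ∀ B ∈ s, ∀ y ∈ B, Rfam D x y := by
        rw [Filter.eventually_all_finset]
        intro B hB
        rw [Filter.eventually_all_finset]
        intro y hy
        exact (hs hB).2.2 y hy
      obtain ⟨D, hD1, hD2⟩ := (hE1.and (hmem (insert x (s.sup id)))).exists
      have hxD : x ∈ D := hD2 (Finset.mem_insert_self x _)
      refine hres (hII D x hxD _ rfl ?_)
      intro B hB
      have hBs : B ∈ s := hB
      have hBdom := hs hBs
      refine ⟨?_, hBdom.1, hBdom.2.1, fun y hy => hD1 B hBs y hy⟩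
      intro y hy
      refine hD2 (Finset.mem_insert_of_mem ?_)
      exact Finset.le_sup (f := id) hBs hy
  · rintro ⟨R, hR, hcons, hclass⟩
    intro A hAne
    haveI := hR
    -- greatest element of a finite nonempty set
    have hmax : ∀ B : Finset Y, B.Nonempty → ∃ x ∈ B, ∀ y ∈ B, R x y := by
      intro B
      induction B using Finset.induction with
      | empty => rintro ⟨y, hy⟩; simp at hy
      | @insert a s ha ih =>
        intro _
        rcases s.eq_empty_or_nonempty with rfl | hsne
        · exact ⟨a, Finset.mem_insert_self a _, by
            intro y hy
            rcases Finset.mem_insert.mp hy with rfl | hy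
            · exact refl_of R y
            · simp at hy⟩
        · obtain ⟨x, hxs, hall⟩ := ih hsne
          rcases total_of R a x with hax | hxa
          · refine ⟨a, Finset.mem_insert_self a _, fun y hy => ?_⟩
            rcases Finset.mem_insert.mp hy with rfl | hy
            · exact refl_of R y
            · exact trans_of R hax (hall y hy)
          · refine ⟨x, Finset.mem_insert_of_mem hxs, fun y hy => ?_⟩
            rcases Finset.mem_insert.mp hy with rfl | hy
            · exact hxa
            · exact hall y hy
    obtain ⟨x, hxA, hall⟩ := hmax A hAne
    have hxΨ : x ∈ Ψ A := by
      by_contra hxΨ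
      obtain ⟨z, hzΨ, hzx⟩ := hcons A hAne x hxA hxΨ
      have := antisymm_of R hzx (hall z (hΨsub A hzΨ))
      exact hxΨ (this ▸ hzΨ)
    have hsub : {B : Finset Y | B ⊆ A ∧ x ∈ B} ⊆
        {B : Finset Y | B.Nonempty ∧ x ∈ B ∧ ∀ y ∈ B, R x y} := by
      rintro B ⟨hBA, hxB⟩
      exact ⟨⟨x, hxB⟩, hxB, fun y hy => hall y (hBA hy)⟩
    refine ⟨x, hxΨ, hT.1 _ _ ?_ (hclass x)⟩
    exact ⟨hsub, fun B _ => rfl⟩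
end

section
/- Let Z be a set, 𝕫 the collection of all finite nonempty subsets of Z, and ℛ : 𝕫 → 𝕫 a map with ℛ(S) ⊆ S such that (i) ℛ(S) is nonempty for every S ∈ 𝕫, and (ii) property α holds: for all T, S ∈ 𝕫 and x ∈ Z with x ∈ T ⊆ S, x ∈ ℛ(S) implies x ∈ ℛ(T). Then there exists ℛ* with ℛ*(S) ⊆ ℛ(S) for every S ∈ 𝕫 such that: (i) ℛ*(S) is nonempty for every S ∈ 𝕫; (ii) property α holds for ℛ*: x ∈ T ⊆ S and x ∈ ℛ*(S) imply x ∈ ℛ*(T); and (iii) property β holds for ℛ*: for all T, S ∈ 𝕫 and x, y ∈ Z with x, y ∈ T ⊆ S, x ∈ ℛ*(T) and y ∈ ℛ*(S) imply x ∈ ℛ*(S). -/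
open Filter

/-- Lemma A.1: any nonempty-valued self-map on finite nonempty sets
satisfying property α can be refined to a nonempty-valued selection satisfying both
properties α and β. -/
theorem stmt11 {Z : Type*} (R : Finset Z → Finset Z)
    (hsub : ∀ S : Finset Z, R S ⊆ S)
    (hne : ∀ S : Finset Z, S.Nonempty → (R S).Nonempty)
    (hα : ∀ T S : Finset Z, ∀ x : Z, x ∈ T → T ⊆ S → x ∈ R S → x ∈ R T) :
    ∃ Rs : Finset Z → Finset Z,
      (∀ S : Finset Z, Rs S ⊆ R S) ∧
      (∀ S : Finset Z, S.Nonempty → (Rs S).Nonempty) ∧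
      (∀ T S : Finset Z, ∀ x : Z, x ∈ T → T ⊆ S → x ∈ Rs S → x ∈ Rs T) ∧
      (∀ T S : Finset Z, ∀ x y : Z, x ∈ T → y ∈ T → T ⊆ S →
        x ∈ Rs T → y ∈ Rs S → x ∈ Rs S) := by
  classical
  -- Finite greedy lemma: on each finite F there is a ranking whose maxima select into R
  have fin : ∀ F : Finset Z, ∃ rel : Z → Z → Prop,
      (∀ x ∈ F, ∀ y ∈ F, rel x y ∨ rel y x) ∧
      (∀ x ∈ F, ∀ y ∈ F, ∀ z ∈ F, rel x y → rel y z → rel x z) ∧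
      (∀ S : Finset Z, S ⊆ F → ∀ m ∈ S, (∀ y ∈ S, rel y m) → m ∈ R S) := by
    intro F
    induction F using Finset.strongInduction with
    | _ F ih =>
      rcases F.eq_empty_or_nonempty with h | h
      · subst h
        exact ⟨fun _ _ => True, by simp, by simp,
          fun S hS m hm _ => absurd (hS hm) (by simp)⟩
      · obtain ⟨a, ha⟩ := hne F h
        have haF : a ∈ F := hsub F ha
        obtain ⟨rel', h1, h2, h3⟩ := ih (F.erase a) (Finset.erase_ssubset haF)
        refine ⟨fun x y => y = a ∨ (x ≠ a ∧ rel' x y), ?_, ?_, ?_⟩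
        · intro x hx y hy
          by_cases hya : y = a
          · exact Or.inl (Or.inl hya)
          · by_cases hxa : x = a
            · exact Or.inr (Or.inl hxa)
            · rcases h1 x (Finset.mem_erase.mpr ⟨hxa, hx⟩) y (Finset.mem_erase.mpr ⟨hya, hy⟩) with h | h
              · exact Or.inl (Or.inr ⟨hxa, h⟩)
              · exact Or.inr (Or.inr ⟨hya, h⟩)
        · intro x hx y hy z hz hxy hyz
          by_cases hza : z = a
          · exact Or.inl hza
          · rcases hyz with hz' | ⟨hya, hyz⟩
            · exact absurd hz' hza
            · rcases hxy with hy' | ⟨hxa, hxy⟩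
              · exact absurd hy' hya
              · exact Or.inr ⟨hxa, h2 x (Finset.mem_erase.mpr ⟨hxa, hx⟩)
                  y (Finset.mem_erase.mpr ⟨hya, hy⟩) z (Finset.mem_erase.mpr ⟨hza, hz⟩) hxy hyz⟩
        · intro S hS m hm hmax
          by_cases hma : m = a
          · subst hma; exact hα S F m hm hS ha
          · have hS' : S ⊆ F.erase a := by
              intro y hy
              rcases hmax y hy with h | ⟨hya, _⟩
              · exact absurd h hma
              · exact Finset.mem_erase.mpr ⟨hya, hS hy⟩
            refine h3 S hS' m hm ?_
            intro y hy
            rcases hmax y hy with h | ⟨_, h⟩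
            · exact absurd h hma
            · exact h
  choose rel htot htrans hgood using fin
  -- Glue the finite rankings with an ultrafilter extending atTop on Finset Z
  haveI : Nonempty (Finset Z) := ⟨∅⟩
  let U : Ultrafilter (Finset Z) := Ultrafilter.of atTop
  have hU : ∀ S : Finset Z, {F | S ⊆ F} ∈ U := by
    intro S
    exact (Ultrafilter.of_le atTop) (mem_atTop S)
  set r : Z → Z → Prop := fun x y => {F : Finset Z | rel F x y} ∈ U with hr
  have hrefl : ∀ x : Z, r x x := by
    intro x
    refine mem_of_superset (hU {x}) ?_
    intro F hF
    have hx : x ∈ F := hF (Finset.mem_singleton_self x)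
    rcases htot F x hx x hx with h | h <;> exact h
  have hrtot : ∀ x y : Z, r x y ∨ r y x := by
    intro x y
    have : {F : Finset Z | rel F x y} ∪ {F | rel F y x} ∈ U := by
      refine mem_of_superset (hU {x, y}) ?_
      intro F hF
      have hx : x ∈ F := hF (by simp)
      have hy : y ∈ F := hF (by simp)
      exact htot F x hx y hy
    exact Ultrafilter.union_mem_iff.mp this
  have hrtrans : ∀ x y z : Z, r x y → r y z → r x z := by
    intro x y z hxy hyz
    refine mem_of_superset (inter_mem (inter_mem hxy hyz) (hU {x, y, z})) ?_
    rintro F ⟨⟨h1', h2'⟩, h3'⟩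
    exact htrans F x (h3' (by simp)) y (h3' (by simp)) z (h3' (by simp)) h1' h2'
  -- every finite nonempty set has an r-maximum
  have hmaxex : ∀ S : Finset Z, S.Nonempty → ∃ m ∈ S, ∀ y ∈ S, r y m := by
    intro S
    induction S using Finset.induction_on with
    | empty => intro h; exact absurd h (by simp)
    | @insert a S ha ih =>
      intro _
      rcases S.eq_empty_or_nonempty with h | h
      · subst h
        exact ⟨a, by simp, by simp [hrefl a]⟩
      · obtain ⟨m, hmS, hmax⟩ := ih h
        rcases hrtot a m with hc | hc
        · refine ⟨m, Finset.mem_insert_of_mem hmS, ?_⟩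
          intro y hy
          rcases Finset.mem_insert.mp hy with rfl | hy
          · exact hc
          · exact hmax y hy
        · refine ⟨a, Finset.mem_insert_self a S, ?_⟩
          intro y hy
          rcases Finset.mem_insert.mp hy with rfl | hy
          · exact hrefl y
          · exact hrtrans y m a (hmax y hy) hc
  refine ⟨fun S => S.filter (fun m => ∀ y ∈ S, r y m), ?_, ?_, ?_, ?_⟩
  · -- Rs S ⊆ R S
    intro S m hm
    rw [Finset.mem_filter] at hm
    obtain ⟨hmS, hmax⟩ := hm
    have hbig : ({F | S ⊆ F} ∩ ⋂ y ∈ S, {F : Finset Z | rel F y m}) ∈ U := by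
      refine inter_mem (hU S) ?_
      exact (Filter.biInter_finset_mem S).mpr (fun y hy => hmax y hy)
    obtain ⟨F, hF1, hF2⟩ := (U : Filter (Finset Z)).nonempty_of_mem hbig
    rw [Set.mem_iInter₂] at hF2
    exact hgood F S hF1 m hmS (fun y hy => hF2 y hy)
  · -- nonemptiness
    intro S hSne
    obtain ⟨m, hm, hmax⟩ := hmaxex S hSne
    exact ⟨m, Finset.mem_filter.mpr ⟨hm, hmax⟩⟩
  · -- property α
    intro T S x hxT hTS hx
    rw [Finset.mem_filter] at hx ⊢
    exact ⟨hxT, fun y hy => hx.2 y (hTS hy)⟩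
  · -- property β
    intro T S x y hxT hyT hTS hx hy
    rw [Finset.mem_filter] at hx hy ⊢
    exact ⟨hTS hxT, fun s hs => hrtrans s y x (hy.2 s hs) (hx.2 y hyT)⟩
end

section
/- Suppose a choice correspondence c over finite nonempty sets of dated payments satisfies Outcome Monotonicity and Time Reference Dependence. Then for every r ∈ T, c satisfies WARP and Stationarity over S_{(·,r)} := {A ∈ 𝒜 : the earliest arrival time of a payment in A equals r}. -/
noncomputable section

variable {a b tb : ℝ}

/-- Lemma 7: under Outcome Monotonicity and Time Reference
Dependence, `c` satisfies WARP and Stationarity over the collection of choice problems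
whose earliest arrival time equals any fixed `r ∈ T`. -/
theorem stmt18 (a b tb : ℝ) (ha : 0 < a) (hab : a < b) (htb : 0 < tb)
    (c : Finset (TAlt a b tb) → Finset (TAlt a b tb))
    (hc : ∀ A : Finset (TAlt a b tb), A.Nonempty → c A ⊆ A ∧ (c A).Nonempty)
    (hmono : OutMono c) (htrd : TimeRefDep c) :
    ∀ r ∈ Set.Icc (0 : ℝ) tb,
      WARPover c {A : Finset (TAlt a b tb) |
        A.Nonempty ∧ (∃ z ∈ A, z.1.2 = r) ∧ ∀ z ∈ A, r ≤ z.1.2} ∧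
      StatOver c {A : Finset (TAlt a b tb) |
        A.Nonempty ∧ (∃ z ∈ A, z.1.2 = r) ∧ ∀ z ∈ A, r ≤ z.1.2} := by
  classical
  intro r hr
  refine ⟨?_, ?_⟩
  · -- WARP: B ⊆ A, both with earliest time r; any earliest element of B is common.
    rintro A ⟨hAne, -, hAlb⟩ B ⟨hBne, ⟨zB, hzB, hzBr⟩, hBlb⟩ hBA hne
    have hpsi : (PsiT A ∩ PsiT B).Nonempty :=
      ⟨zB, ⟨hBA hzB, fun z' hz' => hzBr.le.trans (hAlb z' hz')⟩,
           ⟨hzB, fun z' hz' => hzBr.le.trans (hBlb z' hz')⟩⟩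
    exact (htrd A B hAne hBne hpsi).1 A (by simp) B (by simp) hBA hne
  · rintro A ⟨hAne, ⟨zA, hzA, hzAr⟩, hAlb⟩ B ⟨hBne, ⟨zB, hzB, hzBr⟩, hBlb⟩ d hd
      xt yq xtd yqd hx1 hx2 hy1 hy2 hxcA hyA hyqdB hxtdB
    set C : Finset (TAlt a b tb) := insert zB A with hCdef
    set D : Finset (TAlt a b tb) := insert zA B with hDdef
    have hCne : C.Nonempty := Finset.insert_nonempty _ _
    have hDne : D.Nonempty := Finset.insert_nonempty _ _
    have hClb : ∀ z ∈ C, r ≤ z.1.2 := by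
      intro z hz
      rcases Finset.mem_insert.mp hz with h | h
      · rw [h, hzBr]
      · exact hAlb z h
    have hDlb : ∀ z ∈ D, r ≤ z.1.2 := by
      intro z hz
      rcases Finset.mem_insert.mp hz with h | h
      · rw [h, hzAr]
      · exact hBlb z h
    have hzAA : zA ∈ PsiT A := ⟨hzA, fun z' hz' => hzAr.le.trans (hAlb z' hz')⟩
    have hzBB : zB ∈ PsiT B := ⟨hzB, fun z' hz' => hzBr.le.trans (hBlb z' hz')⟩
    have hzAC : zA ∈ PsiT C :=
      ⟨Finset.mem_insert_of_mem hzA, fun z' hz' => hzAr.le.trans (hClb z' hz')⟩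
    have hzBC : zB ∈ PsiT C :=
      ⟨Finset.mem_insert_self _ _, fun z' hz' => hzBr.le.trans (hClb z' hz')⟩
    have hzAD : zA ∈ PsiT D :=
      ⟨Finset.mem_insert_self _ _, fun z' hz' => hzAr.le.trans (hDlb z' hz')⟩
    have hzBD : zB ∈ PsiT D :=
      ⟨Finset.mem_insert_of_mem hzB, fun z' hz' => hzBr.le.trans (hDlb z' hz')⟩
    by_cases hCA : (c C ∩ A).Nonempty
    · -- c(C) meets A: transfer choice of xt from A to C, then stationarity C vs B.
      have hW := (htrd A C hAne hCne ⟨zA, hzAA, hzAC⟩).1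
      have hEq : c C ∩ A = c A :=
        hW C (by simp) A (by simp) (Finset.subset_insert _ _) hCA
      have hxC : xt ∈ c C := by
        rw [← hEq] at hxcA
        exact (Finset.mem_inter.mp hxcA).1
      have hS := (htrd C B hCne hBne ⟨zB, hzBC, hzBB⟩).2
      exact hS C (by simp) B (by simp) d hd xt yq xtd yqd hx1 hx2 hy1 hy2 hxC
        (Finset.mem_insert_of_mem hyA) hyqdB hxtdB
    · -- c(C) ∩ A = ∅, so c(C) = {zB} and zB ∉ A.
      have hcC : c C = {zB} := by
        rw [Finset.eq_singleton_iff_nonempty_unique_mem]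
        refine ⟨(hc C hCne).2, fun z hz => ?_⟩
        rcases Finset.mem_insert.mp ((hc C hCne).1 hz) with h | h
        · exact h
        · exact absurd ⟨z, Finset.mem_inter.mpr ⟨hz, h⟩⟩ hCA
      have hzBnA : zB ∉ A := by
        intro h
        exact hCA ⟨zB, Finset.mem_inter.mpr ⟨hcC ▸ Finset.mem_singleton_self _, h⟩⟩
      have hneAB : zA ≠ zB := fun h => hzBnA (h ▸ hzA)
      -- The pair P = {zA, zB}
      set P : Finset (TAlt a b tb) := insert zA {zB} with hPdef
      have hPne : P.Nonempty := Finset.insert_nonempty _ _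
      have hPlb : ∀ z ∈ P, r ≤ z.1.2 := by
        intro z hz
        rcases Finset.mem_insert.mp hz with h | h
        · rw [h, hzAr]
        · rw [Finset.mem_singleton.mp h, hzBr]
      have hzAP : zA ∈ PsiT P :=
        ⟨Finset.mem_insert_self _ _, fun z' hz' => hzAr.le.trans (hPlb z' hz')⟩
      have hzBP : zB ∈ PsiT P :=
        ⟨Finset.mem_insert_of_mem (Finset.mem_singleton_self _),
         fun z' hz' => hzBr.le.trans (hPlb z' hz')⟩
      have hPC : P ⊆ C := by
        intro z hz
        rcases Finset.mem_insert.mp hz with h | h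
        · exact h ▸ Finset.mem_insert_of_mem hzA
        · exact (Finset.mem_singleton.mp h) ▸ Finset.mem_insert_self _ _
      have hzBinP : zB ∈ P := Finset.mem_insert_of_mem (Finset.mem_singleton_self _)
      have hWCP := (htrd C P hCne hPne ⟨zA, hzAC, hzAP⟩).1
      have hcP : c P = {zB} := by
        have h1 : c C ∩ P = c P := by
          apply hWCP C (by simp) P (by simp) hPC
          rw [hcC]
          exact ⟨zB, Finset.mem_inter.mpr ⟨Finset.mem_singleton_self _, hzBinP⟩⟩
        rw [← h1, hcC, Finset.singleton_inter_of_mem hzBinP]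
      by_cases hDB : (c D ∩ B).Nonempty
      · -- transfer yqd from B to D, apply stationarity A vs D, and pull back to B.
        have hW := (htrd B D hBne hDne ⟨zB, hzBB, hzBD⟩).1
        have hEq : c D ∩ B = c B :=
          hW D (by simp) B (by simp) (Finset.subset_insert _ _) hDB
        have hyD : yqd ∈ c D := by
          rw [← hEq] at hyqdB
          exact (Finset.mem_inter.mp hyqdB).1
        have hS := (htrd A D hAne hDne ⟨zA, hzAA, hzAD⟩).2
        have hxtdD : xtd ∈ c D :=
          hS A (by simp) D (by simp) d hd xt yq xtd yqd hx1 hx2 hy1 hy2 hxcA hyA hyD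
            (Finset.mem_insert_of_mem hxtdB)
        rw [← hEq]
        exact Finset.mem_inter.mpr ⟨hxtdD, hxtdB⟩
      · -- symmetric degenerate case forces c(P) = {zA}, contradicting c(P) = {zB}.
        have hcD : c D = {zA} := by
          rw [Finset.eq_singleton_iff_nonempty_unique_mem]
          refine ⟨(hc D hDne).2, fun z hz => ?_⟩
          rcases Finset.mem_insert.mp ((hc D hDne).1 hz) with h | h
          · exact h
          · exact absurd ⟨z, Finset.mem_inter.mpr ⟨hz, h⟩⟩ hDB
        have hPD : P ⊆ D := by
          intro z hz
          rcases Finset.mem_insert.mp hz with h | h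
          · exact h ▸ Finset.mem_insert_self _ _
          · exact (Finset.mem_singleton.mp h) ▸ Finset.mem_insert_of_mem hzB
        have hzAinP : zA ∈ P := Finset.mem_insert_self _ _
        have hWDP := (htrd D P hDne hPne ⟨zA, hzAD, hzAP⟩).1
        have hcP' : c P = {zA} := by
          have h1 : c D ∩ P = c P := by
            apply hWDP D (by simp) P (by simp) hPD
            rw [hcD]
            exact ⟨zA, Finset.mem_inter.mpr ⟨Finset.mem_singleton_self _, hzAinP⟩⟩
          rw [← h1, hcD, Finset.singleton_inter_of_mem hzAinP]
        exact absurd (Finset.singleton_injective (hcP'.symm.trans hcP)) hneAB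

end
end
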